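/- Let Γ(f), Γ(g) be Newton polyhedra in ℝ₊^n and (t₀,…,t₀) the diagonal intersection point with ∂Γ(fg). For every w ∈ ℝ₊^n with d(w,Γ(g)) − d(w,Γ(f)) > 0 (i.e. w ∈ T₊), one has σ(w)/(d(w,Γ(g)) − d(w,Γ(f))) ≥ σ(w)/(d(w,Γ(g)) + d(w,Γ(f))) ≥ 1/t₀. Consequently every candidate positive pole σ(w)/(d(w,Γ(g)) − d(w,Γ(f))) with w ∈ T₊ is at least 1/t₀. -/

import Mathlib

open Finset Pointwise

variable {n : ℕ}

/-- The pairing `⟨k,x⟩ = ∑ i, k i * x i`. -/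
noncomputable def dotp (k x : Fin n → ℝ) : ℝ := ∑ i, k i * x i

/-- Convex hull of the union of translated positive orthants `m + ℝ₊ⁿ`. -/
def orthHull (S : Set (Fin n → ℝ)) : Set (Fin n → ℝ) :=
  convexHull ℝ (⋃ m ∈ S, {x : Fin n → ℝ | ∀ i, m i ≤ x i})

/-- `Γ` is a Newton polyhedron: the convex hull of `⋃_{m ∈ supp} (m + ℝ₊ⁿ)`
for a nonempty finite set of lattice points (the support of a polynomial
vanishing at the origin). -/
def IsNewtonPolyhedron (Γ : Set (Fin n → ℝ)) : Prop :=
  ∃ S : Finset (Fin n → ℕ), S.Nonempty ∧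
    Γ = orthHull ((fun m : Fin n → ℕ => fun i => (m i : ℝ)) '' (S : Set (Fin n → ℕ)))

/-- `d(k,Γ) = min_{x ∈ Γ} ⟨k,x⟩`. -/
noncomputable def dval (k : Fin n → ℝ) (Γ : Set (Fin n → ℝ)) : ℝ :=
  sInf ((fun x => dotp k x) '' Γ)

/-- First meet locus `F(k,Γ) = {x ∈ Γ : ⟨k,x⟩ = d(k,Γ)}`. -/
def fmeet (k : Fin n → ℝ) (Γ : Set (Fin n → ℝ)) : Set (Fin n → ℝ) :=
  {x ∈ Γ | dotp k x = dval k Γ}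

/-- `σ(k) = ∑ i, k i`. -/
noncomputable def sigmaS (k : Fin n → ℝ) : ℝ := ∑ i, k i

/-- The smallest face of `Γ` containing a point `p`: the intersection of all
first meet loci (faces) containing `p`. -/
def minFace (Γ : Set (Fin n → ℝ)) (p : Fin n → ℝ) : Set (Fin n → ℝ) :=
  ⋂₀ {F | p ∈ F ∧ ∃ k : Fin n → ℝ, (∀ i, 0 ≤ k i) ∧ F = fmeet k Γ}

/-- Cast a lattice vector to `ℝⁿ`. -/
def natVec (w : Fin n → ℕ) : Fin n → ℝ := fun i => (w i : ℝ)

/-- `w` is the primitive normal vector of a facet (face of dimension `n-1`) of `Γ`. -/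
def IsPrimFacetNormal (Γ : Set (Fin n → ℝ)) (w : Fin n → ℕ) : Prop :=
  w ≠ 0 ∧ Finset.univ.gcd w = 1 ∧
    Module.finrank ℝ (affineSpan ℝ (fmeet (natVec w) Γ)).direction = n - 1

/-- `D(t₀)`: primitive normal vectors of the facets of `Γ` containing the
smallest face through the diagonal point `p = (t₀,…,t₀)`. -/
def Dset (Γ : Set (Fin n → ℝ)) (p : Fin n → ℝ) : Set (Fin n → ℕ) :=
  {w | IsPrimFacetNormal Γ w ∧ minFace Γ p ⊆ fmeet (natVec w) Γ}

/-!
On the Minkowski sum `Γ(f) + Γ(g)` the linear form `⟨w, ·⟩` is at least `d(w,Γ(f)) + d(w,Γ(g))`;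
this is a closed condition, so it holds at the boundary point `(t₀,…,t₀)`, giving
`d(w,Γ(f)) + d(w,Γ(g)) ≤ σ(w) t₀`. Newton polyhedra lie in `ℝ₊ⁿ`, so both `d`-values are
nonnegative for `w ∈ ℝ₊ⁿ`, and replacing the denominator `d_g + d_f` by `d_g - d_f > 0` can only
increase `σ(w) / (·)`.
-/

lemma orthHull_subset_Ici {S : Set (Fin n → ℝ)} {a : Fin n → ℝ} (h : ∀ m ∈ S, a ≤ m) :
    orthHull S ⊆ Set.Ici a :=
  convexHull_min (Set.iUnion₂_subset fun m hm _ hx => (h m hm).trans hx) (convex_Ici a)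

lemma IsNewtonPolyhedron.subset_Ici_zero {Γ : Set (Fin n → ℝ)} (hΓ : IsNewtonPolyhedron Γ) :
    Γ ⊆ Set.Ici 0 := by
  obtain ⟨S, -, rfl⟩ := hΓ
  refine orthHull_subset_Ici ?_
  rintro _ ⟨m, -, rfl⟩ i
  exact Nat.cast_nonneg (m i)

lemma dotp_nonneg {k x : Fin n → ℝ} (hk : 0 ≤ k) (hx : 0 ≤ x) : 0 ≤ dotp k x :=
  Finset.sum_nonneg fun i _ => mul_nonneg (hk i) (hx i)

lemma dotp_add (k x y : Fin n → ℝ) : dotp k (x + y) = dotp k x + dotp k y := by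
  simp only [dotp, Pi.add_apply, mul_add, Finset.sum_add_distrib]

lemma dotp_const (k : Fin n → ℝ) (t : ℝ) : dotp k (fun _ => t) = sigmaS k * t := by
  rw [dotp, sigmaS, Finset.sum_mul]

lemma continuous_dotp (k : Fin n → ℝ) : Continuous (dotp k) :=
  continuous_finsetSum _ fun i _ => continuous_const.mul (continuous_apply i)

section dval

variable {Γ : Set (Fin n → ℝ)} {k : Fin n → ℝ}

lemma dval_nonneg (hΓ : Γ ⊆ Set.Ici 0) (hk : 0 ≤ k) : 0 ≤ dval k Γ :=
  Real.sInf_nonneg <| Set.forall_mem_image.2 fun _ hx => dotp_nonneg hk (hΓ hx)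

lemma dval_le_dotp (hΓ : Γ ⊆ Set.Ici 0) (hk : 0 ≤ k) {x : Fin n → ℝ} (hx : x ∈ Γ) :
    dval k Γ ≤ dotp k x :=
  csInf_le ⟨0, Set.forall_mem_image.2 fun _ hy => dotp_nonneg hk (hΓ hy)⟩ ⟨x, hx, rfl⟩

end dval

lemma dval_add_dval_le_dotp {Γ₁ Γ₂ : Set (Fin n → ℝ)} (hΓ₁ : Γ₁ ⊆ Set.Ici 0)
    (hΓ₂ : Γ₂ ⊆ Set.Ici 0) {k : Fin n → ℝ} (hk : 0 ≤ k) {p : Fin n → ℝ}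
    (hp : p ∈ closure (Γ₁ + Γ₂)) : dval k Γ₁ + dval k Γ₂ ≤ dotp k p := by
  have hsum : Γ₁ + Γ₂ ⊆ {x | dval k Γ₁ + dval k Γ₂ ≤ dotp k x} := by
    rintro _ ⟨x, hx, y, hy, rfl⟩
    rw [Set.mem_ofPred_eq, dotp_add]
    exact add_le_add (dval_le_dotp hΓ₁ hk hx) (dval_le_dotp hΓ₂ hk hy)
  exact closure_minimal hsum (isClosed_le continuous_const (continuous_dotp k)) hp

lemma dval_add_dval_le_sigmaS_mul {Γ₁ Γ₂ : Set (Fin n → ℝ)} (hΓ₁ : IsNewtonPolyhedron Γ₁)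
    (hΓ₂ : IsNewtonPolyhedron Γ₂) {k : Fin n → ℝ} (hk : 0 ≤ k) {t : ℝ}
    (ht : (fun _ : Fin n => t) ∈ frontier (Γ₁ + Γ₂)) :
    dval k Γ₁ + dval k Γ₂ ≤ sigmaS k * t :=
  dotp_const k t ▸ dval_add_dval_le_dotp hΓ₁.subset_Ici_zero hΓ₂.subset_Ici_zero hk
    (frontier_subset_closure ht)

theorem positive_candidate_poles_bounded_by_diagonal_general
    (Γf Γg : Set (Fin n → ℝ))
    (hΓf : IsNewtonPolyhedron Γf) (hΓg : IsNewtonPolyhedron Γg)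
    (t₀ : ℝ) (ht₀ : 0 < t₀)
    (hdiag : (fun _ : Fin n => t₀) ∈ frontier (Γf + Γg)) :
    ∀ w : Fin n → ℝ, (∀ i, 0 ≤ w i) →
      0 < dval w Γg - dval w Γf →
      (sigmaS w / (dval w Γg - dval w Γf) ≥ sigmaS w / (dval w Γg + dval w Γf) ∧
       sigmaS w / (dval w Γg + dval w Γf) ≥ 1 / t₀ ∧
       1 / t₀ ≤ sigmaS w / (dval w Γg - dval w Γf)) := by
  intro w hw hpos
  have hf := dval_nonneg hΓf.subset_Ici_zero hw
  have hdiag_bound := dval_add_dval_le_sigmaS_mul hΓf hΓg hw hdiag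
  have hsum_le : sigmaS w / (dval w Γg + dval w Γf) ≤ sigmaS w / (dval w Γg - dval w Γf) :=
    div_le_div_of_nonneg_left (Finset.sum_nonneg fun i _ => hw i) hpos (by linarith)
  have hdiag_le : 1 / t₀ ≤ sigmaS w / (dval w Γg + dval w Γf) := by
    rw [div_le_div_iff₀ ht₀ (by linarith)]
    linarith
  exact ⟨hsum_le, hdiag_le, hdiag_le.trans hsum_le⟩

/-- for every `w ∈ ℝ₊ⁿ` with `d(w,Γ(g)) − d(w,Γ(f)) > 0` (i.e. `w ∈ T₊`),
`σ(w)/(d(w,Γ(g)) − d(w,Γ(f))) ≥ σ(w)/(d(w,Γ(g)) + d(w,Γ(f))) ≥ 1/t₀`;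
consequently every positive candidate pole is at least `1/t₀`. -/
theorem positive_candidate_poles_bounded_by_diagonal
    (hn : 2 ≤ n)
    (Γf Γg : Set (Fin n → ℝ))
    (hΓf : IsNewtonPolyhedron Γf) (hΓg : IsNewtonPolyhedron Γg)
    (t₀ : ℝ) (ht₀ : 0 < t₀)
    (hdiag : (fun _ : Fin n => t₀) ∈ frontier (Γf + Γg)) :
    ∀ w : Fin n → ℝ, (∀ i, 0 ≤ w i) →
      0 < dval w Γg - dval w Γf →
      (sigmaS w / (dval w Γg - dval w Γf) ≥ sigmaS w / (dval w Γg + dval w Γf) ∧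
       sigmaS w / (dval w Γg + dval w Γf) ≥ 1 / t₀ ∧
       1 / t₀ ≤ sigmaS w / (dval w Γg - dval w Γf)) :=
  positive_candidate_poles_bounded_by_diagonal_general Γf Γg hΓf hΓg t₀ ht₀ hdiag
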